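/- (Spreading branch repetitions) Let Π be a normal expanded natural deduction proof in M⊃ of a formula α with height(Π) ≤ m where m = |α|, and let p ∈ ℕ with p > 0. If some sequence of formulas b occurs as a branch of Π more than m^p times (i.e., more than m^p branches of Π have exactly the formula sequence b), then there is a level μ such that at least m^{p-1} of these branch instances have the minimal formula of b occurring at level μ in Π. -/

import Mathlib

/-- Formulas of minimal implicational logic M⊃. -/
inductive MFormula : Type
  | var : ℕ → MFormula
  | imp : MFormula → MFormula → MFormula
deriving DecidableEq

namespace MFormula

/-- Size of a formula: number of vertices of its syntax tree. -/
def size : MFormula → ℕ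
  | .var _ => 1
  | .imp a b => a.size + b.size + 1

/-- Subformula relation. -/
inductive Subf : MFormula → MFormula → Prop
  | refl (t : MFormula) : Subf t t
  | impL {s a b : MFormula} : Subf s a → Subf s (imp a b)
  | impR {s a b : MFormula} : Subf s b → Subf s (imp a b)

/-- The finite set of subformulas of a formula. -/
def subformulas : MFormula → Finset MFormula
  | .var n => {.var n}
  | .imp a b => insert (imp a b) (a.subformulas ∪ b.subformulas)

end MFormula

/-- Natural deduction derivation trees for M⊃.  A leaf is an assumption
occurrence, carrying its formula and `none` if it stays open, or `some n`
if it is discharged by the `n`-th ⊃-Intro application below it (de Bruijn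
style, counting enclosing ⊃-Intro applications from the leaf downwards).
`elim a b` applies ⊃-Elim with minor premise `a` and major premise `b`;
`intro A t` applies ⊃-Intro discharging (the marked occurrences of) `A`. -/
inductive NDTree : Type
  | leaf : MFormula → Option ℕ → NDTree
  | elim : NDTree → NDTree → NDTree
  | intro : MFormula → NDTree → NDTree
deriving DecidableEq

namespace NDTree

/-- Conclusion of a derivation tree relative to the list of formulas
introduced by enclosing ⊃-Intro applications (innermost first);
`none` if the tree is not a well-formed derivation. -/
def concl : NDTree → List MFormula → Option MFormula
  | .leaf A none, _ => some A
  | .leaf A (some n), ctx => if ctx[n]? = some A then some A else none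
  | .elim a b, ctx =>
      match concl a ctx, concl b ctx with
      | some x, some (.imp p q) => if p = x then some q else none
      | _, _ => none
  | .intro A t, ctx => (concl t (A :: ctx)).map (fun B => MFormula.imp A B)

/-- Size of a derivation: its number of nodes. -/
def size : NDTree → ℕ
  | .leaf _ _ => 1
  | .elim a b => a.size + b.size + 1
  | .intro _ t => t.size + 1

/-- Height of a derivation: maximal number of edges on a root-to-leaf path. -/
def height : NDTree → ℕ
  | .leaf _ _ => 0
  | .elim a b => max a.height b.height + 1
  | .intro _ t => t.height + 1

/-- Open assumptions of a subtree sitting below `d` of its own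
⊃-Intro applications (at top level `d = 0`): leaves discharged by no
⊃-Intro of the subtree itself. -/
def openAssumAux : NDTree → ℕ → Finset MFormula
  | .leaf A none, _ => {A}
  | .leaf A (some n), d => if d ≤ n then {A} else ∅
  | .elim a b, d => openAssumAux a d ∪ openAssumAux b d
  | .intro _ t, d => openAssumAux t (d + 1)

/-- The set of open (undischarged) assumptions of a derivation. -/
def openAssum (t : NDTree) : Finset MFormula := openAssumAux t 0

/-- A derivation is normal if no formula occurrence is simultaneously the
conclusion of a ⊃-Intro and the major premise of a ⊃-Elim. -/
def Normal : NDTree → Prop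
  | .leaf _ _ => True
  | .elim a b => Normal a ∧ Normal b ∧ ∀ A u, b ≠ .intro A u
  | .intro _ t => Normal t

/-- `T` is a proof of `α`: a derivation with conclusion `α` and
no open assumptions. -/
def IsProofOf (t : NDTree) (α : MFormula) : Prop :=
  concl t [] = some α ∧ openAssum t = ∅

/-- A normal derivation (in context `ctx`) is expanded if every minimal
formula, i.e. every formula occurrence that is both the conclusion of a
⊃-Elim and the premise of a ⊃-Intro, is a propositional variable. -/
def Expanded : NDTree → List MFormula → Prop
  | .leaf _ _, _ => True
  | .elim a b, ctx => Expanded a ctx ∧ Expanded b ctx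
  | .intro A t, ctx => Expanded t (A :: ctx) ∧
      (∀ u v, t = .elim u v → ∃ i, concl t (A :: ctx) = some (.var i))

/-- `Subtree s t`: `s` is a sub-derivation (a node of `t` together with
everything above it) of `t`. -/
inductive Subtree : NDTree → NDTree → Prop
  | refl (t : NDTree) : Subtree t t
  | elimL {s a b : NDTree} : Subtree s a → Subtree s (.elim a b)
  | elimR {s a b : NDTree} : Subtree s b → Subtree s (.elim a b)
  | intro {s : NDTree} {A : MFormula} {t : NDTree} : Subtree s t → Subtree s (.intro A t)

/-- Number of instances (sub-derivation occurrences identical to `s`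
as labeled trees) of `s` in a derivation. -/
def countInst (s : NDTree) : NDTree → ℕ
  | .leaf A o => if NDTree.leaf A o = s then 1 else 0
  | .elim a b => (if NDTree.elim a b = s then 1 else 0) + countInst s a + countInst s b
  | .intro A t => (if NDTree.intro A t = s then 1 else 0) + countInst s t

/-- Number of instances of `s` occurring at level (distance from the root) `μ`. -/
def countInstAt (s : NDTree) : NDTree → ℕ → ℕ
  | t, 0 => if t = s then 1 else 0
  | .leaf _ _, _ + 1 => 0
  | .elim a b, n + 1 => countInstAt s a n + countInstAt s b n
  | .intro _ t, n + 1 => countInstAt s t n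

/-- `OccAt T ctx s ctx'` : `s` occurs in `T` (whose own context is `ctx`)
as a node-with-everything-above-it, with enclosing-intro context `ctx'`. -/
inductive OccAt : NDTree → List MFormula → NDTree → List MFormula → Prop
  | refl (t : NDTree) (ctx : List MFormula) : OccAt t ctx t ctx
  | elimL {T : NDTree} {ctx : List MFormula} {a b : NDTree} {ctx' : List MFormula} :
      OccAt T ctx (.elim a b) ctx' → OccAt T ctx a ctx'
  | elimR {T : NDTree} {ctx : List MFormula} {a b : NDTree} {ctx' : List MFormula} :
      OccAt T ctx (.elim a b) ctx' → OccAt T ctx b ctx'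
  | intro {T : NDTree} {ctx : List MFormula} {A : MFormula} {t : NDTree} {ctx' : List MFormula} :
      OccAt T ctx (.intro A t) ctx' → OccAt T ctx t (A :: ctx')

/-- Each node of a derivation lies on a unique branch; branches are in
bijection with their endpoints: the root of the derivation and the minor
premises of ⊃-Elim applications. -/
def IsBranchEndpoint (T s : NDTree) (ctx : List MFormula) : Prop :=
  (s = T ∧ ctx = []) ∨ ∃ u, OccAt T [] (NDTree.elim s u) ctx

/-- The (top-down) sequence of formulas of the branch ending at the root of
the given subtree: trace upwards through premises of ⊃-Intro and major
premises of ⊃-Elim up to a top-formula. -/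
def branchSeq : NDTree → List MFormula → Option (List MFormula)
  | .leaf A o, ctx => (concl (.leaf A o) ctx).map (fun c => [c])
  | .elim a b, ctx =>
      match branchSeq b ctx, concl (.elim a b) ctx with
      | some l, some c => some (l ++ [c])
      | _, _ => none
  | .intro A t, ctx =>
      match branchSeq t (A :: ctx), concl (.intro A t) ctx with
      | some l, some c => some (l ++ [c])
      | _, _ => none

/-- The (top-down) E-part of the branch ending at the root of the given
subtree: the top-formula and the successive conclusions of major-premise
⊃-Elim steps, ending at the minimal formula of the branch. -/
def epart : NDTree → List MFormula → Option (List MFormula)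
  | .leaf A o, ctx => (concl (.leaf A o) ctx).map (fun c => [c])
  | .elim a b, ctx =>
      match epart b ctx, concl (.elim a b) ctx with
      | some l, some c => some (l ++ [c])
      | _, _ => none
  | .intro A t, ctx => epart t (A :: ctx)

/-- Number of ⊃-Intro applications forming the I-part at the bottom of a
branch endpoint subtree. -/
def introCount : NDTree → ℕ
  | .intro _ t => introCount t + 1
  | _ => 0

/-- Count of branch endpoints strictly inside the given subtree (i.e. minor
premises of ⊃-Elim) whose branch has formula sequence `b`. -/
def brCount (b : List MFormula) : NDTree → List MFormula → ℕ
  | .leaf _ _, _ => 0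
  | .elim a c, ctx =>
      (if branchSeq a ctx = some b then 1 else 0) + brCount b a ctx + brCount b c ctx
  | .intro A t, ctx => brCount b t (A :: ctx)

/-- Total number of branches of `T` whose formula sequence is `b`. -/
def brTotal (b : List MFormula) (T : NDTree) : ℕ :=
  (if branchSeq T [] = some b then 1 else 0) + brCount b T []

/-- Count of branch endpoints strictly inside the given subtree (whose root
is at level `d` of the ambient derivation) whose branch has formula
sequence `b` and whose minimal formula occurs at level `μ`. -/
def brMinCount (b : List MFormula) (μ : ℕ) : NDTree → List MFormula → ℕ → ℕ
  | .leaf _ _, _, _ => 0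
  | .elim a c, ctx, d =>
      (if branchSeq a ctx = some b ∧ d + 1 + introCount a = μ then 1 else 0)
      + brMinCount b μ a ctx (d + 1) + brMinCount b μ c ctx (d + 1)
  | .intro A t, ctx, d => brMinCount b μ t (A :: ctx) (d + 1)

/-- Total number of branches of `T` with formula sequence `b` whose minimal
formula occurs at level `μ` of `T`. -/
def brMinTotal (b : List MFormula) (μ : ℕ) (T : NDTree) : ℕ :=
  (if branchSeq T [] = some b ∧ introCount T = μ then 1 else 0) + brMinCount b μ T [] 0

/-- No occurrence of `A` in the given subtree (sitting at intro-depth `d`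
below a fixed ⊃-Intro application) is an open assumption of the subtree
escaping that ⊃-Intro: every leaf labeled `A` is discharged by an
⊃-Intro at distance at most `d`. -/
def NoOpenBeyond (A : MFormula) : NDTree → ℕ → Prop
  | .leaf B o, d => B = A → ∃ n, o = some n ∧ n ≤ d
  | .elim a b, d => NoOpenBeyond A a d ∧ NoOpenBeyond A b d
  | .intro _ t, d => NoOpenBeyond A t (d + 1)

/-- Every ⊃-Intro application of the derivation is greedy: it discharges
all occurrences of its assumption that are open in the sub-derivation of
its premise. -/
def Greedy : NDTree → Prop
  | .leaf _ _ => True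
  | .elim a b => Greedy a ∧ Greedy b
  | .intro A t => NoOpenBeyond A t 0 ∧ Greedy t

/-- A matrix of `T`: a sub-derivation all of whose instances in `T` occur
at a single level. -/
def IsMatrix (s T : NDTree) : Prop :=
  Subtree s T ∧ ∃ μ, ∀ ν, 0 < countInstAt s T ν → ν = μ

end NDTree

/-- A Kripke model for M⊃: a preordered set of worlds with a monotone
valuation on propositional variables. -/
structure KModel where
  World : Type
  le : World → World → Prop
  le_refl : ∀ w, le w w
  le_trans : ∀ {a b c}, le a b → le b c → le a c
  val : World → ℕ → Prop
  mono : ∀ {w w'}, le w w' → ∀ p, val w p → val w' p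

/-- Kripke satisfaction for M⊃. -/
def KSat (M : KModel) : MFormula → M.World → Prop
  | .var p, w => M.val w p
  | .imp a b, w => ∀ w', M.le w w' → KSat M a w' → KSat M b w'

/-- Semantic entailment: every world of every Kripke model satisfying all
of `Δ` satisfies `β`. -/
def KEntails (Δ : Set MFormula) (β : MFormula) : Prop :=
  ∀ (M : KModel) (w : M.World), (∀ δ ∈ Δ, KSat M δ w) → KSat M β w

/-! Since `height T ≤ m`, the minimal formulas of the branches of `T` lie at levels `0, …, m`,
and levels `0` and `m` are never both used by branches with the same formula sequence `b`.
A minimal formula at level `0` belongs to the main branch with empty I-part; as a normal proof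
is not an assumption, that branch starts with an ⊃-Elim step `x ⊃ y, y`. A minimal formula at
level `m ≥ height T` sits on a branch that is a top-formula followed by ⊃-Intros only, so every
step of `b` goes from `y` to some `A ⊃ y`, and `y = A ⊃ (x ⊃ y)` is impossible. Hence the more
than `m ^ p` branches with sequence `b` are spread over only `m` levels, and pigeonhole applies.
-/

namespace NDTree

theorem introCount_le_height : ∀ t : NDTree, t.introCount ≤ t.height
  | .leaf _ _ => le_rfl
  | .elim _ _ => Nat.zero_le _
  | .intro _ t => Nat.succ_le_succ (introCount_le_height t)

theorem branchSeq_getLast? {t : NDTree} {ctx l : List MFormula}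
    (h : t.branchSeq ctx = some l) : l.getLast? = t.concl ctx := by
  cases t with
  | leaf A o =>
    simp only [branchSeq, Option.map_eq_some_iff] at h
    obtain ⟨c, hc, rfl⟩ := h
    simp [hc]
  | elim | intro =>
    rw [branchSeq] at h
    split at h
    · cases h; simp_all
    · simp at h

/-- `t.introCount = t.height` says that `t` is an assumption followed by ⊃-Intros only. -/
theorem isChain_branchSeq_of_introCount_eq_height {t : NDTree} (ht : t.introCount = t.height)
    {ctx l : List MFormula} (h : t.branchSeq ctx = some l) :
    l.IsChain (fun β β' => ∃ A, β' = .imp A β) := by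
  induction t generalizing ctx l with
  | leaf A o =>
    simp only [branchSeq, Option.map_eq_some_iff] at h
    obtain ⟨c, -, rfl⟩ := h
    exact .singleton c
  | elim a c => simp [introCount, height] at ht
  | intro A u ih =>
    simp only [introCount, height, Nat.add_right_cancel_iff] at ht
    rw [branchSeq] at h
    split at h
    · rename_i lu c hu hc
      cases h
      rw [concl, Option.map_eq_some_iff] at hc
      obtain ⟨cu, hcu, rfl⟩ := hc
      refine (ih ht hu).append (.singleton _) fun β hβ β' hβ' => ⟨A, ?_⟩
      rw [branchSeq_getLast? hu, hcu] at hβ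
      simp_all
    · simp at h

theorem exists_concl_eq_imp_of_concl_elim {a c : NDTree} {ctx : List MFormula} {q : MFormula}
    (h : (elim a c).concl ctx = some q) : ∃ x, c.concl ctx = some (.imp x q) := by
  rw [concl] at h
  split at h
  · split at h
    · cases h
      exact ⟨_, by assumption⟩
    · simp at h
  · simp at h

theorem branchSeq_elim_eq_cons {a c : NDTree} (hn : (elim a c).Normal) {ctx l : List MFormula}
    (h : (elim a c).branchSeq ctx = some l) : ∃ x y l', l = .imp x y :: y :: l' := by
  induction c generalizing a l with
  | leaf B o =>
    rw [branchSeq] at h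
    split at h
    · rename_i lB q hB hq
      cases h
      obtain ⟨x, hx⟩ := exists_concl_eq_imp_of_concl_elim hq
      rw [branchSeq, hx] at hB
      cases hB
      exact ⟨x, q, [], rfl⟩
    · simp at h
  | elim a' c' _ ih =>
    rw [branchSeq] at h
    split at h
    · rename_i lc q hc hq
      cases h
      obtain ⟨x, y, l', rfl⟩ := ih hn.2.1 hc
      exact ⟨x, y, l' ++ [q], by simp⟩
    · simp at h
  | intro A u => exact absurd rfl (hn.2.2 A u)

theorem brMinCount_zero (b : List MFormula) :
    ∀ (t : NDTree) (ctx : List MFormula) (d : ℕ), brMinCount b 0 t ctx d = 0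
  | .leaf _ _, _, _ => rfl
  | .elim a c, ctx, d => by
    rw [brMinCount, brMinCount_zero b a, brMinCount_zero b c, if_neg (by omega)]
  | .intro _ t, _, _ => brMinCount_zero b t _ _

theorem isChain_of_brMinCount_pos {b : List MFormula} {μ : ℕ} :
    ∀ {t : NDTree} {ctx : List MFormula} {d : ℕ}, d + t.height ≤ μ →
      0 < brMinCount b μ t ctx d → b.IsChain (fun β β' => ∃ A, β' = .imp A β)
  | .leaf _ _, _, _, _, h => by simp [brMinCount] at h
  | .elim a c, ctx, d, hd, h => by
    simp only [height] at hd
    rw [brMinCount] at h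
    by_cases hb : a.branchSeq ctx = some b ∧ d + 1 + a.introCount = μ
    · have := introCount_le_height a
      exact isChain_branchSeq_of_introCount_eq_height (by omega) hb.1
    · rw [if_neg hb] at h
      by_cases ha : 0 < brMinCount b μ a ctx (d + 1)
      · exact isChain_of_brMinCount_pos (by omega) ha
      · have hc : 0 < brMinCount b μ c ctx (d + 1) := by omega
        exact isChain_of_brMinCount_pos (by omega) hc
  | .intro _ t, _, _, hd, h => by
    simp only [height] at hd
    exact isChain_of_brMinCount_pos (t := t) (by omega) h

theorem sum_range_ite_and_eq {P : Prop} [Decidable P] {k N : ℕ} (hk : k ≤ N) :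
    ∑ μ ∈ Finset.range (N + 1), (if P ∧ k = μ then 1 else 0) = if P then 1 else 0 := by
  by_cases hP : P <;> simp [hP, hk]

theorem sum_brMinCount (b : List MFormula) {N : ℕ} :
    ∀ {t : NDTree} {ctx : List MFormula} {d : ℕ}, d + t.height ≤ N →
      ∑ μ ∈ Finset.range (N + 1), brMinCount b μ t ctx d = brCount b t ctx
  | .leaf _ _, _, _, _ => by simp [brMinCount, brCount]
  | .elim a c, ctx, d, hd => by
    simp only [height] at hd
    have := introCount_le_height a
    simp only [brMinCount, brCount, Finset.sum_add_distrib]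
    rw [sum_range_ite_and_eq (by omega), sum_brMinCount b (t := a) (by omega),
      sum_brMinCount b (t := c) (by omega)]
  | .intro _ t, _, _, hd => by
    simp only [height] at hd
    exact sum_brMinCount b (t := t) (by omega)

theorem sum_brMinTotal (b : List MFormula) {T : NDTree} {N : ℕ} (hN : T.height ≤ N) :
    ∑ μ ∈ Finset.range (N + 1), brMinTotal b μ T = brTotal b T := by
  have := introCount_le_height T
  simp only [brMinTotal, brTotal, Finset.sum_add_distrib]
  rw [sum_range_ite_and_eq (by omega), sum_brMinCount b (by omega)]

theorem isChain_of_brMinTotal_pos {b : List MFormula} {T : NDTree} {N : ℕ} (hN : T.height ≤ N)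
    (h : 0 < brMinTotal b N T) : b.IsChain (fun β β' => ∃ A, β' = .imp A β) := by
  rw [brMinTotal] at h
  by_cases hb : T.branchSeq [] = some b ∧ T.introCount = N
  · have := introCount_le_height T
    exact isChain_branchSeq_of_introCount_eq_height (by omega) hb.1
  · rw [if_neg hb, zero_add] at h
    exact isChain_of_brMinCount_pos (by omega) h

theorem eq_imp_cons_of_brMinTotal_zero_pos {b : List MFormula} {T : NDTree} {α : MFormula}
    (hproof : T.IsProofOf α) (hnormal : T.Normal) (h : 0 < brMinTotal b 0 T) :
    ∃ x y l, b = .imp x y :: y :: l := by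
  rw [brMinTotal, brMinCount_zero, add_zero] at h
  obtain ⟨hb, h0⟩ : T.branchSeq [] = some b ∧ T.introCount = 0 := by
    by_contra hc
    rw [if_neg hc] at h
    exact h.false
  cases T with
  | leaf A o => cases o <;> simp [IsProofOf, openAssum, openAssumAux, concl] at hproof
  | elim a c => exact branchSeq_elim_eq_cons hnormal hb
  | intro => simp [introCount] at h0

theorem brMinTotal_zero_eq_zero_or_brMinTotal_eq_zero {b : List MFormula} {T : NDTree}
    {α : MFormula} {N : ℕ} (hproof : T.IsProofOf α) (hnormal : T.Normal) (hN : T.height ≤ N) :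
    brMinTotal b 0 T = 0 ∨ brMinTotal b N T = 0 := by
  by_contra! h
  obtain ⟨x, y, l, rfl⟩ :=
    eq_imp_cons_of_brMinTotal_zero_pos hproof hnormal (Nat.pos_of_ne_zero h.1)
  obtain ⟨A, hA⟩ := (List.isChain_cons_cons.1 (isChain_of_brMinTotal_pos hN
    (Nat.pos_of_ne_zero h.2))).1
  have := congrArg MFormula.size hA
  simp only [MFormula.size] at this
  omega

theorem exists_card_eq_sum_brMinTotal_eq {b : List MFormula} {T : NDTree} {α : MFormula} {N : ℕ}
    (hproof : T.IsProofOf α) (hnormal : T.Normal) (hN : T.height ≤ N) :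
    ∃ S : Finset ℕ, S.card = N ∧ ∑ μ ∈ S, brMinTotal b μ T = brTotal b T := by
  obtain ⟨e, he, hzero⟩ : ∃ e ∈ Finset.range (N + 1), brMinTotal b e T = 0 := by
    rcases brMinTotal_zero_eq_zero_or_brMinTotal_eq_zero hproof hnormal hN with h | h
    exacts [⟨0, by simp, h⟩, ⟨N, by simp, h⟩]
  refine ⟨(Finset.range (N + 1)).erase e, by simp [Finset.card_erase_of_mem he], ?_⟩
  rw [Finset.sum_erase _ (f := fun μ => brMinTotal b μ T) hzero, sum_brMinTotal b hN]

end NDTree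

theorem Finset.exists_le_of_card_mul_pred_lt_sum {ι : Type*} {s : Finset ι} {f : ι → ℕ}
    {K : ℕ} (h : s.card * (K - 1) < ∑ i ∈ s, f i) : ∃ i ∈ s, K ≤ f i := by
  obtain ⟨i, hi, hlt⟩ := Finset.exists_lt_of_sum_lt (f := fun _ => K - 1) (by simpa using h)
  exact ⟨i, hi, by omega⟩

theorem Nat.mul_pow_pred_sub_one_le (m p : ℕ) : m * (m ^ (p - 1) - 1) ≤ m ^ p := by
  rcases p with _ | p
  · simp
  · rw [Nat.add_sub_cancel, Nat.mul_sub_one, ← pow_succ']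
    exact Nat.sub_le _ _

theorem spreading_branch_repetitions_general (T : NDTree) (α : MFormula) (p : ℕ)
    (hproof : T.IsProofOf α) (hnormal : T.Normal)
    (hheight : T.height ≤ α.size)
    (b : List MFormula) (hb : α.size ^ p < NDTree.brTotal b T) :
    ∃ μ, α.size ^ (p - 1) ≤ NDTree.brMinTotal b μ T := by
  obtain ⟨S, hcard, hsum⟩ :=
    NDTree.exists_card_eq_sum_brMinTotal_eq (b := b) hproof hnormal hheight
  obtain ⟨μ, -, hμ⟩ := S.exists_le_of_card_mul_pred_lt_sum (K := α.size ^ (p - 1)) <| by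
    rw [hcard, hsum]
    exact (Nat.mul_pow_pred_sub_one_le _ p).trans_lt hb
  exact ⟨μ, hμ⟩

/-- Spreading branch repetitions: if a formula sequence `b`
occurs as a branch of a linearly height-bounded normal expanded proof more
than m^p times, then at least m^(p-1) of these branch instances have their
minimal formula at a common level μ. -/
theorem spreading_branch_repetitions (T : NDTree) (α : MFormula) (p : ℕ)
    (hproof : T.IsProofOf α) (hnormal : T.Normal) (hexp : T.Expanded [])
    (hheight : T.height ≤ α.size) (hp : 0 < p)
    (b : List MFormula) (hb : α.size ^ p < NDTree.brTotal b T) :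
    ∃ μ, α.size ^ (p - 1) ≤ NDTree.brMinTotal b μ T :=
  spreading_branch_repetitions_general T α p hproof hnormal hheight b hb
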